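/- arXiv:1904.01199 — 2 statements merged into one kernel-verified Lean document; each statement's English description precedes it below -/
import Mathlib

section
/- If m : [0,𝒯]×[0,𝒰] → (0,∞) is continuous and Lebesgue-integrable and multiplicatively separable, i.e. m(s,u) = m̄₁(s)·m̄₂(u) for some functions m̄₁ : [0,𝒯] → (0,∞) and m̄₂ : [0,𝒰] → (0,∞), then for every t ∈ (0,𝒯): [∫_0^{min(t,𝒰)} m(𝒯−t,u) du] · [∫_t^𝒯 ∫_0^𝒰 m(𝒯−s,u) du ds] = [∫_0^𝒰 m(𝒯−t,u) du] · [∫_t^𝒯 ∫_0^{min(t,𝒰)} m(𝒯−s,u) du ds]. -/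
open MeasureTheory Set

/- Separability makes every inner integral `∫_0^c m(𝒯-s,u) du` factor as `m₁(𝒯-s) · M₂(c)` with
`M₂(c) = ∫_0^c m₂`, so both sides equal `m₁(𝒯-t) · M₂(min t 𝒰) · M₂(𝒰) · ∫_t^𝒯 m₁(𝒯-s) ds`. -/

theorem intervalIntegral_eq_const_mul_of_eqOn {f g : ℝ → ℝ} {k a b : ℝ}
    (h : EqOn f (fun u => k * g u) (uIcc a b)) :
    ∫ u in a..b, f u = k * ∫ u in a..b, g u := by
  rw [← intervalIntegral.integral_const_mul]
  exact intervalIntegral.integral_congr h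

theorem mul_integral_comm_of_separable {F : ℝ → ℝ → ℝ} {φ ψ : ℝ → ℝ} {S X : Set ℝ}
    (hF : ∀ s ∈ S, ∀ x ∈ X, F s x = φ s * ψ x) {s₀ a b c d : ℝ} (hs₀ : s₀ ∈ S)
    (hab : uIcc a b ⊆ S) (hc : c ∈ X) (hd : d ∈ X) :
    F s₀ c * ∫ s in a..b, F s d = F s₀ d * ∫ s in a..b, F s c := by
  have hint : ∀ x ∈ X, ∫ s in a..b, F s x = (∫ s in a..b, φ s) * ψ x := fun x hx => by
    rw [← intervalIntegral.integral_mul_const]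
    exact intervalIntegral.integral_congr fun s hs => hF s (hab hs) x hx
  rw [hint c hc, hint d hd, hF s₀ hs₀ c hc, hF s₀ hs₀ d hd]
  ring

theorem statement2_general (𝒯 𝒰 : ℝ) (hU : 0 < 𝒰)
    (m : ℝ → ℝ → ℝ) (m₁ m₂ : ℝ → ℝ)
    (hsep : ∀ s ∈ Set.Icc (0:ℝ) 𝒯, ∀ u ∈ Set.Icc (0:ℝ) 𝒰, m s u = m₁ s * m₂ u)
    (t : ℝ) (ht : t ∈ Set.Ioo (0:ℝ) 𝒯) :
    (∫ u in (0:ℝ)..min t 𝒰, m (𝒯 - t) u) *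
        (∫ s in t..𝒯, ∫ u in (0:ℝ)..𝒰, m (𝒯 - s) u) =
      (∫ u in (0:ℝ)..𝒰, m (𝒯 - t) u) *
        (∫ s in t..𝒯, ∫ u in (0:ℝ)..min t 𝒰, m (𝒯 - s) u) := by
  obtain ⟨ht0, htT⟩ := ht
  have hfactor : ∀ s ∈ Icc 0 𝒯, ∀ c ∈ Icc 0 𝒰,
      ∫ u in (0:ℝ)..c, m (𝒯 - s) u = m₁ (𝒯 - s) * ∫ u in (0:ℝ)..c, m₂ u := by
    rintro s ⟨hs0, hsT⟩ c ⟨hc0, hcU⟩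
    refine intervalIntegral_eq_const_mul_of_eqOn fun u hu => ?_
    rw [uIcc_of_le hc0] at hu
    exact hsep _ ⟨by linarith, by linarith⟩ u ⟨hu.1, hu.2.trans hcU⟩
  refine mul_integral_comm_of_separable hfactor ⟨ht0.le, htT.le⟩ ?_
    ⟨le_min ht0.le hU.le, min_le_right _ _⟩ ⟨hU.le, le_rfl⟩
  rw [uIcc_of_le htT.le]
  exact Icc_subset_Icc_left ht0.le

/-- key integral identity in the proof of Proposition 1: if
`m : [0,𝒯]×[0,𝒰] → (0,∞)` is continuous, Lebesgue-integrable and multiplicatively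
separable, `m(s,u) = m₁(s) m₂(u)` with `m₁, m₂ > 0`, then for every `t ∈ (0,𝒯)`,
`(∫_0^{min(t,𝒰)} m(𝒯−t,u) du)(∫_t^𝒯 ∫_0^𝒰 m(𝒯−s,u) du ds)
  = (∫_0^𝒰 m(𝒯−t,u) du)(∫_t^𝒯 ∫_0^{min(t,𝒰)} m(𝒯−s,u) du ds)`,
i.e. truncating the `u`-integration to `[0,t]` does not change the cost-weighted
reverse hazard ratio. -/
theorem statement2 (𝒯 𝒰 : ℝ) (hT : 0 < 𝒯) (hU : 0 < 𝒰) (hUT : 𝒰 ≤ 𝒯)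
    (m : ℝ → ℝ → ℝ) (m₁ m₂ : ℝ → ℝ)
    (hmcont : ContinuousOn (fun p : ℝ × ℝ => m p.1 p.2) (Set.Icc 0 𝒯 ×ˢ Set.Icc 0 𝒰))
    (hmint : IntegrableOn (fun p : ℝ × ℝ => m p.1 p.2) (Set.Icc 0 𝒯 ×ˢ Set.Icc 0 𝒰) volume)
    (hmpos : ∀ s ∈ Set.Icc (0:ℝ) 𝒯, ∀ u ∈ Set.Icc (0:ℝ) 𝒰, 0 < m s u)
    (hm₁pos : ∀ s ∈ Set.Icc (0:ℝ) 𝒯, 0 < m₁ s)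
    (hm₂pos : ∀ u ∈ Set.Icc (0:ℝ) 𝒰, 0 < m₂ u)
    (hsep : ∀ s ∈ Set.Icc (0:ℝ) 𝒯, ∀ u ∈ Set.Icc (0:ℝ) 𝒰, m s u = m₁ s * m₂ u)
    (t : ℝ) (ht : t ∈ Set.Ioo (0:ℝ) 𝒯) :
    (∫ u in (0:ℝ)..min t 𝒰, m (𝒯 - t) u) *
        (∫ s in t..𝒯, ∫ u in (0:ℝ)..𝒰, m (𝒯 - s) u) =
      (∫ u in (0:ℝ)..𝒰, m (𝒯 - t) u) *
        (∫ s in t..𝒯, ∫ u in (0:ℝ)..min t 𝒰, m (𝒯 - s) u) :=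
  statement2_general 𝒯 𝒰 hU m m₁ m₂ hsep t ht
end

section
/- Let g ≥ 0 be a measurable integrable function on [0,∞)×[0,𝒯]×[0,𝒰] such that ∫_0^∞ g(z,s,u) dz = f_T(s)·f_U(u) for all (s,u), where f_T is continuous and strictly positive on [0,𝒯] and f_U is continuous and strictly positive on [0,𝒰]. Then for every t ∈ (0,𝒯): [∫_t^𝒯 ∫_0^∞ ∫_0^{min(t,𝒰)} g(z,𝒯−s,u) du dz ds] / [∫_0^∞ ∫_0^{min(t,𝒰)} g(z,𝒯−t,u) du dz] = [∫_t^𝒯 f_T(𝒯−s) ds] / f_T(𝒯−t); in other words, truncating the underwriting-date integration to u ≤ t does not change the reverse-time hazard of T, which therefore equals α^R(t) = f_T(𝒯−t)/∫_t^𝒯 f_T(𝒯−s) ds. -/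
open MeasureTheory Filter

/-- truncation does not change the reverse-time hazard of `T`: let
`g ≥ 0` be measurable and integrable on `[0,∞)×[0,𝒯]×[0,𝒰]` with
`∫_0^∞ g(z,s,u) dz = f_T(s) f_U(u)` for all `(s,u)`, where `f_T` and `f_U` are
continuous and strictly positive on `[0,𝒯]` and `[0,𝒰]`.  Then for every `t ∈ (0,𝒯)`,
`(∫_t^𝒯 ∫_0^∞ ∫_0^{min(t,𝒰)} g(z,𝒯−s,u) du dz ds) / (∫_0^∞ ∫_0^{min(t,𝒰)} g(z,𝒯−t,u) du dz)
  = (∫_t^𝒯 f_T(𝒯−s) ds) / f_T(𝒯−t)`,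
the reciprocal of the reverse-time hazard `α^R(t) = f_T(𝒯−t)/∫_t^𝒯 f_T(𝒯−s) ds`. -/
theorem statement3 (𝒯 𝒰 : ℝ) (hT : 0 < 𝒯) (hU : 0 < 𝒰) (hUT : 𝒰 ≤ 𝒯)
    (g : ℝ → ℝ → ℝ → ℝ) (fT fU : ℝ → ℝ)
    (hgmeas : Measurable (fun p : ℝ × ℝ × ℝ => g p.1 p.2.1 p.2.2))
    (hgnonneg : ∀ z s u, 0 ≤ g z s u)
    (hgint : IntegrableOn (fun p : ℝ × ℝ × ℝ => g p.1 p.2.1 p.2.2)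
      (Set.Ici 0 ×ˢ Set.Icc 0 𝒯 ×ˢ Set.Icc 0 𝒰) volume)
    (hfTcont : ContinuousOn fT (Set.Icc 0 𝒯))
    (hfTpos : ∀ s ∈ Set.Icc (0:ℝ) 𝒯, 0 < fT s)
    (hfUcont : ContinuousOn fU (Set.Icc 0 𝒰))
    (hfUpos : ∀ u ∈ Set.Icc (0:ℝ) 𝒰, 0 < fU u)
    (hmarg : ∀ s ∈ Set.Icc (0:ℝ) 𝒯, ∀ u ∈ Set.Icc (0:ℝ) 𝒰,
      (∫ z in Set.Ioi (0:ℝ), g z s u) = fT s * fU u)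
    (t : ℝ) (ht : t ∈ Set.Ioo (0:ℝ) 𝒯) :
    (∫ s in t..𝒯, ∫ z in Set.Ioi (0:ℝ), ∫ u in (0:ℝ)..min t 𝒰, g z (𝒯 - s) u) /
        (∫ z in Set.Ioi (0:ℝ), ∫ u in (0:ℝ)..min t 𝒰, g z (𝒯 - t) u) =
      (∫ s in t..𝒯, fT (𝒯 - s)) / fT (𝒯 - t) := by

  obtain ⟨ht0, htT⟩ := ht
  have hm0 : 0 < min t 𝒰 := lt_min ht0 hU
  have hmU : min t 𝒰 ≤ 𝒰 := min_le_right _ _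
  have hIocU : Set.Ioc (0:ℝ) (min t 𝒰) ⊆ Set.Icc 0 𝒰 :=
    Set.Ioc_subset_Icc_self.trans (Set.Icc_subset_Icc le_rfl hmU)
  -- slice integrability in z
  have hslice : ∀ s ∈ Set.Icc (0:ℝ) 𝒯, ∀ u ∈ Set.Icc (0:ℝ) 𝒰,
      IntegrableOn (fun z => g z s u) (Set.Ioi 0) := by
    intro s hs u hu
    by_contra h
    have h0 := integral_undef h
    rw [hmarg s hs u hu] at h0
    exact (mul_pos (hfTpos s hs) (hfUpos u hu)).ne' h0
  have hfUint : IntegrableOn fU (Set.Icc 0 𝒰) := hfUcont.integrableOn_Icc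
  have hCpos : 0 < ∫ u in (0:ℝ)..min t 𝒰, fU u := by
    apply intervalIntegral.intervalIntegral_pos_of_pos_on
    · exact (hfUcont.mono (Set.Icc_subset_Icc le_rfl hmU)).intervalIntegrable_of_Icc hm0.le
    · intro x hx
      exact hfUpos x ⟨hx.1.le, hx.2.le.trans hmU⟩
    · exact hm0
  have key : ∀ s ∈ Set.Icc (0:ℝ) 𝒯,
      (∫ z in Set.Ioi (0:ℝ), ∫ u in (0:ℝ)..min t 𝒰, g z s u)
        = (∫ u in (0:ℝ)..min t 𝒰, fU u) * fT s := by
    intro s hs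
    have hmeas2 : Measurable (fun p : ℝ × ℝ => g p.2 s p.1) :=
      hgmeas.comp (measurable_snd.prodMk (measurable_const.prodMk measurable_fst))
    have hfUm : IntegrableOn (fun u => fT s * fU u) (Set.Ioc 0 (min t 𝒰)) :=
      (hfUint.mono_set hIocU).const_mul (fT s)
    have hint : Integrable (fun p : ℝ × ℝ => g p.2 s p.1)
        ((volume.restrict (Set.Ioc 0 (min t 𝒰))).prod (volume.restrict (Set.Ioi 0))) := by
      rw [MeasureTheory.integrable_prod_iff hmeas2.aestronglyMeasurable]
      constructor
      · filter_upwards [ae_restrict_mem measurableSet_Ioc] with u hu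
        exact hslice s hs u (hIocU hu)
      · apply hfUm.congr
        filter_upwards [ae_restrict_mem measurableSet_Ioc] with u hu
        rw [← hmarg s hs u (hIocU hu)]
        exact (setIntegral_congr_fun measurableSet_Ioi
          fun z _ => (Real.norm_of_nonneg (hgnonneg _ _ _))).symm
    have swap := MeasureTheory.integral_integral_swap (f := fun u z => g z s u) hint
    have h1 : (∫ z in Set.Ioi (0:ℝ), ∫ u in (0:ℝ)..min t 𝒰, g z s u)
        = ∫ z in Set.Ioi (0:ℝ), ∫ u in Set.Ioc 0 (min t 𝒰), g z s u :=
      setIntegral_congr_fun measurableSet_Ioi fun z _ =>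
        intervalIntegral.integral_of_le hm0.le
    rw [h1, ← swap]
    calc ∫ u in Set.Ioc (0:ℝ) (min t 𝒰), ∫ z in Set.Ioi (0:ℝ), g z s u
        = ∫ u in Set.Ioc (0:ℝ) (min t 𝒰), fT s * fU u :=
          setIntegral_congr_fun measurableSet_Ioc fun u hu => hmarg s hs u (hIocU hu)
      _ = fT s * ∫ u in Set.Ioc (0:ℝ) (min t 𝒰), fU u := by rw [integral_const_mul]
      _ = (∫ u in (0:ℝ)..min t 𝒰, fU u) * fT s := by
          rw [intervalIntegral.integral_of_le hm0.le]; ring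
  have hTt : 𝒯 - t ∈ Set.Icc (0:ℝ) 𝒯 := ⟨by linarith, by linarith⟩
  have hnum : (∫ s in t..𝒯, ∫ z in Set.Ioi (0:ℝ), ∫ u in (0:ℝ)..min t 𝒰, g z (𝒯 - s) u)
      = (∫ u in (0:ℝ)..min t 𝒰, fU u) * ∫ s in t..𝒯, fT (𝒯 - s) := by
    rw [← intervalIntegral.integral_const_mul]
    apply intervalIntegral.integral_congr
    intro s hsx
    rw [Set.uIcc_of_le htT.le] at hsx
    exact key (𝒯 - s) ⟨by linarith [hsx.2], by linarith [hsx.1]⟩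
  rw [hnum, key (𝒯 - t) hTt, mul_div_mul_left _ _ hCpos.ne']
end
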